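/- For any permutation p of {1,...,n} in which the values 1 and 2 are not positionally adjacent, after at most n-1 applications of SC_231, the values 1 and 2 become positionally adjacent; i.e., SC_231^(n-1)(p) has 1 and 2 adjacent. -/

import Mathlib

/-- One step-by-step implementation of the `SC_231` stack-sorting machine.
`sc231Aux input stack out`: the next input entry is pushed onto the stack unless
pushing it would create a consecutive occurrence of the pattern `231` read from
top to bottom among the stack entries (i.e. the incoming `x` on top of `y`, `z`
with `z < x < y`), in which case the top of the stack is popped and appended to
the output; once the input is exhausted the remaining stack entries are popped. -/
def sc231Aux : List ℕ → List ℕ → List ℕ → List ℕ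
  | [], stack, out => out ++ stack
  | x :: rest, y :: z :: s, out =>
      if z < x ∧ x < y then sc231Aux (x :: rest) (z :: s) (out ++ [y])
      else sc231Aux rest (x :: y :: z :: s) out
  | x :: rest, stack, out => sc231Aux rest (x :: stack) out
termination_by input stack _ => 2 * input.length + stack.length
decreasing_by all_goals (simp; try omega)

/-- The consecutive-pattern-avoiding stack sort map `SC_231`. -/
def SC231 (p : List ℕ) : List ℕ := sc231Aux p [] []

/-- The list of entries that are *pre-popped* while `SC_231` processes the
input, i.e. popped while input entries still remain. -/
def prePopsAux : List ℕ → List ℕ → List ℕ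
  | [], _ => []
  | x :: rest, y :: z :: s =>
      if z < x ∧ x < y then y :: prePopsAux (x :: rest) (z :: s)
      else prePopsAux rest (x :: y :: z :: s)
  | x :: rest, stack => prePopsAux rest (x :: stack)
termination_by input stack => 2 * input.length + stack.length
decreasing_by all_goals (simp; try omega)

def prePops (p : List ℕ) : List ℕ := prePopsAux p []

/-- `p` has a peak: an interior position whose entry exceeds both neighbours. -/
def HasPeak (p : List ℕ) : Prop :=
  ∃ i, i + 2 < p.length ∧ p[i]! < p[i+1]! ∧ p[i+2]! < p[i+1]!

/-- `p` is a permutation of `{1, …, n}` (written as a list of its entries). -/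
def IsPermOf (n : ℕ) (p : List ℕ) : Prop := p.Perm (List.range' 1 n)

/-- `p` contains the (classical) pattern `q`. -/
def ContainsPat (p q : List ℕ) : Prop :=
  ∃ s : List ℕ, s.Sublist p ∧ s.length = q.length ∧
    ∀ i j, i < s.length → j < s.length → (s[i]! < s[j]! ↔ q[i]! < q[j]!)

def AvoidsPat (p q : List ℕ) : Prop := ¬ ContainsPat p q

/-- The sort-number of `p`: the least `k` with `SC_231^k(p)` peakless. -/
noncomputable def sortNum (p : List ℕ) : ℕ := sInf {k | ¬ HasPeak (SC231^[k] p)}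

/-- The values `1` and `2` are positionally adjacent in `p`. -/
def Adj12 (p : List ℕ) : Prop :=
  p.idxOf 1 + 1 = p.idxOf 2 ∨ p.idxOf 2 + 1 = p.idxOf 1

/-!
Write the input as `u e m f v` with `{e, f} = {1, 2}`. A pre-popped entry `y` is popped over
some `z < x < y`, so it is at least `3`. An entry `b` lying on an entry `z ≥ b - 1`, or at the
bottom of the stack, is never popped, because that needs an incoming `x` with `z < x < b`.
Hence once pushed, `e` and then `f` stay on the stack, and the final stack, which ends the
output, reads `V f W e S` with `W` what is left of `m`: the gap between `1` and `2` never grows.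

The final stack avoids consecutive `231`, so from the second pass on the input read from `e`
onwards does too. If then `m ≠ []`, some entry is popped while `m f` is read: otherwise every
entry is pushed directly onto the previous two, avoiding `231` forces `e < m₁ < m₂ < ⋯`, and
`f` would pop the top entry or complete a consecutive `231`. So every pass but the first
shortens the gap, which is less than `n` to begin with.
-/

def finalStack : List ℕ → List ℕ → List ℕ
  | [], stack => stack
  | x :: rest, y :: z :: s =>
      if z < x ∧ x < y then finalStack (x :: rest) (z :: s)
      else finalStack rest (x :: y :: z :: s)
  | x :: rest, stack => finalStack rest (x :: stack)
termination_by input stack => 2 * input.length + stack.length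
decreasing_by all_goals (simp; try omega)

theorem sc231Aux_eq (l stack out : List ℕ) :
    sc231Aux l stack out = out ++ prePopsAux l stack ++ finalStack l stack := by
  induction l, stack using finalStack.induct generalizing out with
  | case1 stack => simp [sc231Aux, prePopsAux, finalStack]
  | case2 x rest y z s hpop ih => simp [sc231Aux, prePopsAux, finalStack, hpop, ih]
  | case3 x rest y z s hpop ih => simp [sc231Aux, prePopsAux, finalStack, hpop, ih]
  | case4 x rest stack hshort ih =>
    rw [sc231Aux.eq_3 _ _ _ _ hshort, prePopsAux.eq_3 _ _ _ hshort,
      finalStack.eq_3 _ _ _ hshort, ih]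

theorem SC231_eq (p : List ℕ) : SC231 p = prePops p ++ finalStack p [] := by
  simp [SC231, prePops, sc231Aux_eq]

theorem prePopsAux_append_finalStack_perm (l stack : List ℕ) :
    (prePopsAux l stack ++ finalStack l stack).Perm (l ++ stack) := by
  induction l, stack using finalStack.induct with
  | case1 stack => simp [prePopsAux, finalStack]
  | case2 x rest y z s hpop ih =>
    rw [prePopsAux, finalStack, if_pos hpop, if_pos hpop, List.cons_append]
    exact (ih.cons y).trans List.perm_middle.symm
  | case3 x rest y z s hpop ih =>
    rw [prePopsAux, finalStack, if_neg hpop, if_neg hpop]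
    exact ih.trans List.perm_middle
  | case4 x rest stack hshort ih =>
    rw [prePopsAux.eq_3 _ _ _ hshort, finalStack.eq_3 _ _ _ hshort]
    exact ih.trans List.perm_middle

theorem SC231_perm (p : List ℕ) : (SC231 p).Perm p := by
  simpa [SC231_eq, prePops] using prePopsAux_append_finalStack_perm p []

theorem mem_of_mem_finalStack {a : ℕ} {l stack : List ℕ} (h : a ∈ finalStack l stack) :
    a ∈ l ++ stack :=
  (prePopsAux_append_finalStack_perm l stack).subset (List.mem_append_right _ h)

theorem finalStack_append (l₁ l₂ stack : List ℕ) :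
    finalStack (l₁ ++ l₂) stack = finalStack l₂ (finalStack l₁ stack) := by
  induction l₁, stack using finalStack.induct with
  | case1 stack => simp [finalStack]
  | case2 x rest y z s hpop ih =>
    rw [List.cons_append, finalStack, finalStack, if_pos hpop, if_pos hpop, ← List.cons_append,
      ih]
  | case3 x rest y z s hpop ih =>
    rw [List.cons_append, finalStack, finalStack, if_neg hpop, if_neg hpop, ih]
  | case4 x rest stack hshort ih =>
    rw [List.cons_append, finalStack.eq_3 _ _ _ hshort, finalStack.eq_3 _ _ _ hshort, ih]

theorem three_le_of_mem_prePopsAux {l stack : List ℕ} (hl : ∀ x ∈ l, 0 < x)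
    (hstack : ∀ x ∈ stack, 0 < x) {a : ℕ} (ha : a ∈ prePopsAux l stack) : 3 ≤ a := by
  induction l, stack using prePopsAux.induct with
  | case1 => simp [prePopsAux] at ha
  | case2 x rest y z s hpop ih =>
    rw [prePopsAux, if_pos hpop, List.mem_cons] at ha
    rcases ha with rfl | ha
    · have := hstack z (by simp)
      omega
    · exact ih hl (fun b hb => hstack b (List.mem_cons_of_mem _ hb)) ha
  | case3 x rest y z s hpop ih =>
    rw [prePopsAux, if_neg hpop] at ha
    exact ih (fun b hb => hl b (List.mem_cons_of_mem _ hb))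
      (List.forall_mem_cons.2 ⟨hl x (by simp), hstack⟩) ha
  | case4 x rest stack hshort ih =>
    rw [prePopsAux.eq_3 _ _ _ hshort] at ha
    exact ih (fun b hb => hl b (List.mem_cons_of_mem _ hb))
      (List.forall_mem_cons.2 ⟨hl x (by simp), hstack⟩) ha

def AvoidsConsec231 : List ℕ → Prop
  | x :: y :: z :: t => ¬(z < x ∧ x < y) ∧ AvoidsConsec231 (y :: z :: t)
  | _ => True

theorem AvoidsConsec231.tail {a : ℕ} {l : List ℕ} (h : AvoidsConsec231 (a :: l)) :
    AvoidsConsec231 l := by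
  match l, h with
  | [], _ | [_], _ => trivial
  | _ :: _ :: _, h => exact h.2

theorem AvoidsConsec231.of_suffix {s l : List ℕ} (h : AvoidsConsec231 l) (hs : s <:+ l) :
    AvoidsConsec231 s := by
  obtain ⟨c, rfl⟩ := hs
  induction c with
  | nil => exact h
  | cons a c ih => exact ih h.tail

theorem avoidsConsec231_finalStack {l stack : List ℕ} (h : AvoidsConsec231 stack) :
    AvoidsConsec231 (finalStack l stack) := by
  induction l, stack using finalStack.induct with
  | case1 => rwa [finalStack]
  | case2 x rest y z s hpop ih =>
    rw [finalStack, if_pos hpop]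
    exact ih h.tail
  | case3 x rest y z s hpop ih =>
    rw [finalStack, if_neg hpop]
    exact ih ⟨hpop, h⟩
  | case4 x rest stack hshort ih =>
    rw [finalStack.eq_3 _ _ _ hshort]
    apply ih
    match stack, hshort with
    | [], _ | [_], _ => trivial
    | y :: z :: s, hshort => exact (hshort y z s rfl).elim

theorem avoidsConsec231_of_SC231_eq {p u w : List ℕ} {e : ℕ} (hp : ∀ x ∈ p, 0 < x)
    (he : e ≤ 2) (h : SC231 p = u ++ e :: w) : AvoidsConsec231 (e :: w) := by
  have hfinal := avoidsConsec231_finalStack (l := p) (stack := []) trivial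
  have he_pre : e ∉ prePops p := fun hmem => by
    have := three_le_of_mem_prePopsAux hp (by simp) hmem
    omega
  rw [SC231_eq] at h
  rcases List.append_eq_append_iff.1 h with ⟨as, -, hF⟩ | ⟨bs, hpre, hw⟩
  · exact hfinal.of_suffix ⟨as, hF.symm⟩
  · cases bs with
    | nil => rwa [hw, List.nil_append]
    | cons a bs =>
      rw [List.cons_append, List.cons.injEq] at hw
      exact absurd (hpre ▸ by simp [hw.1]) he_pre

theorem exists_finalStack_append_cons {b : ℕ} {r : List ℕ} (hr : ∀ z ∈ r, b ≤ z + 1)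
    (l st : List ℕ) : ∃ T, finalStack l (st ++ b :: r) = T ++ b :: r := by
  generalize hstack : st ++ b :: r = stack
  induction l, stack using finalStack.induct generalizing st with
  | case1 stack => exact ⟨st, by rw [finalStack, ← hstack]⟩
  | case2 x rest y z s hpop ih =>
    rw [finalStack, if_pos hpop]
    cases st with
    | nil =>
      obtain ⟨rfl, rfl⟩ : b = y ∧ r = z :: s := by simpa using hstack
      have := hr z (by simp)
      omega
    | cons a st => exact ih st (List.cons.inj hstack).2
  | case3 x rest y z s hpop ih =>
    rw [finalStack, if_neg hpop]
    exact ih (x :: st) (by rw [← hstack, List.cons_append])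
  | case4 x rest stack hshort ih =>
    rw [finalStack.eq_3 _ _ _ hshort]
    exact ih (x :: st) (by rw [← hstack, List.cons_append])

theorem exists_finalStack_singleton_eq_cons (x : ℕ) :
    ∀ stack, ∃ R, finalStack [x] stack = x :: R
  | y :: z :: s => by
    rw [finalStack]
    split_ifs
    · exact exists_finalStack_singleton_eq_cons x (z :: s)
    · exact ⟨_, by rw [finalStack]⟩
  | [] => ⟨[], by simp [finalStack]⟩
  | [y] => ⟨[y], by simp [finalStack]⟩

theorem finalStack_cons_of_forall_le {x : ℕ} {stack : List ℕ} (h : ∀ z ∈ stack, x ≤ z)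
    (l : List ℕ) : finalStack (x :: l) stack = finalStack l (x :: stack) := by
  match stack, h with
  | y :: z :: s, h =>
    have := h z (by simp)
    rw [finalStack, if_neg (by omega)]
  | [], _ | [_], _ => simp [finalStack]

theorem prePopsAux_cons_cons_of_lt {x a : ℕ} (h : a < x) (l s : List ℕ) :
    prePopsAux (x :: l) (a :: s) = prePopsAux l (x :: a :: s) := by
  cases s with
  | nil => simp [prePopsAux]
  | cons z s => rw [prePopsAux, if_neg (by omega)]

theorem prePopsAux_append_singleton_ne_nil {a b f : ℕ} {l v : List ℕ} (hab : a < b)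
    (hfb : f < b) (hfa : f ≠ a) (hl : ∀ x ∈ l, f < x) (hnd : (a :: b :: l).Nodup)
    (h231 : AvoidsConsec231 (a :: b :: (l ++ f :: v))) (s : List ℕ) :
    prePopsAux (l ++ [f]) (b :: a :: s) ≠ [] := by
  induction l generalizing a b s with
  | nil =>
    have : a < f := by
      have := h231.1
      omega
    simp [prePopsAux, this, hfb]
  | cons x l ih =>
    rw [List.cons_append, prePopsAux]
    split_ifs with hpop
    · simp
    · have hbx : b < x := by
        have := h231.1
        simp only [List.nodup_cons, List.mem_cons] at hnd
        omega
      exact ih hbx (hl x (by simp)) hfb.ne (fun y hy => hl y (by simp [hy])) hnd.of_cons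
        h231.2 (a :: s)

theorem exists_finalStack_append_singleton {e f : ℕ} {S : List ℕ} (hef : e ≠ f)
    (hS : ∀ z ∈ S, e ≤ z + 1) (m : List ℕ) :
    ∃ W, finalStack (m ++ [f]) (e :: S) = f :: (W ++ e :: S) := by
  obtain ⟨T, hT⟩ := exists_finalStack_append_cons hS (m ++ [f]) []
  obtain ⟨R, hR⟩ := exists_finalStack_singleton_eq_cons f (finalStack m (e :: S))
  rw [List.nil_append, finalStack_append, hR] at hT
  rw [finalStack_append, hR, hT]
  cases T with
  | nil => exact absurd (List.cons.inj hT).1 hef.symm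
  | cons t W => exact ⟨W, by rw [(List.cons.inj hT).1, List.cons_append]⟩

theorem exists_finalStack_cons_append_cons {e f : ℕ} {m v S : List ℕ}
    (hef : e = 1 ∧ f = 2 ∨ e = 2 ∧ f = 1) (hm : ∀ x ∈ m, 2 < x) (hmnd : m.Nodup)
    (hS : ∀ x ∈ S, 2 < x) :
    ∃ V W, finalStack (e :: (m ++ f :: v)) S = V ++ f :: (W ++ e :: S) ∧
      W.length ≤ m.length ∧
      (AvoidsConsec231 (e :: (m ++ f :: v)) → m ≠ [] → W.length < m.length) := by
  obtain ⟨W, hstack⟩ := exists_finalStack_append_singleton (e := e) (f := f) (S := S)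
    (by omega) (fun z hz => by have := hS z hz; omega) m
  have hlen := (prePopsAux_append_finalStack_perm (m ++ [f]) (e :: S)).length_eq
  simp only [hstack, List.length_append, List.length_cons, List.length_nil] at hlen
  have hW : ∀ z ∈ W ++ e :: S, f ≤ z + 1 := by
    intro z hz
    have := mem_of_mem_finalStack (hstack ▸ List.mem_cons_of_mem f hz)
    simp only [List.mem_append, List.mem_cons, List.not_mem_nil, or_false] at this
    rcases this with (hz | rfl) | rfl | hz
    · have := hm z hz; omega
    · omega
    · omega
    · have := hS z hz; omega
  obtain ⟨V, hV⟩ := exists_finalStack_append_cons hW v []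
  refine ⟨V, W, ?_, by omega, fun h231 hm0 => ?_⟩
  · rw [finalStack_cons_of_forall_le (fun z hz => by have := hS z hz; omega),
      show m ++ f :: v = m ++ [f] ++ v by simp, finalStack_append, hstack]
    simpa using hV
  obtain ⟨x, m, rfl⟩ := List.exists_cons_of_ne_nil hm0
  have hx := hm x (by simp)
  have hpop : prePopsAux (x :: m ++ [f]) (e :: S) ≠ [] := by
    rw [List.cons_append, prePopsAux_cons_cons_of_lt (by omega)]
    refine prePopsAux_append_singleton_ne_nil (by omega) (by omega) (by omega)
      (fun y hy => by have := hm y (by simp [hy]); omega) ?_ h231 S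
    exact List.nodup_cons.2 ⟨fun h => by have := hm e h; omega, hmnd⟩
  have := List.length_pos_of_ne_nil hpop
  simp only [List.length_cons] at hlen ⊢
  omega

theorem List.Nodup.idxOf_append_cons {α : Type*} [BEq α] [LawfulBEq α] {a : α}
    {l₁ l₂ : List α} (h : (l₁ ++ a :: l₂).Nodup) : (l₁ ++ a :: l₂).idxOf a = l₁.length := by
  have ha : a ∉ l₁ := fun ha => (List.nodup_append.1 h).2.2 a ha a (by simp) rfl
  rw [List.idxOf_append_of_notMem ha, List.idxOf_cons_self, add_zero]

def gap12 (p : List ℕ) : ℕ := Nat.dist (p.idxOf 1) (p.idxOf 2)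

theorem adj12_iff_gap12_eq_one {p : List ℕ} : Adj12 p ↔ gap12 p = 1 := by
  unfold Adj12 gap12 Nat.dist
  omega

theorem one_le_gap12 {p : List ℕ} (h1 : 1 ∈ p) : 1 ≤ gap12 p :=
  Nat.dist_pos_of_ne fun h => by simpa using (List.idxOf_inj h1).1 h

theorem gap12_le_length_sub_one {p : List ℕ} (h1 : 1 ∈ p) (h2 : 2 ∈ p) :
    gap12 p ≤ p.length - 1 := by
  have := List.idxOf_lt_length_iff.2 h1
  have := List.idxOf_lt_length_iff.2 h2
  unfold gap12 Nat.dist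
  omega

theorem gap12_eq {e f : ℕ} {u m v : List ℕ} (hef : e = 1 ∧ f = 2 ∨ e = 2 ∧ f = 1)
    (hnd : (u ++ e :: (m ++ f :: v)).Nodup) :
    gap12 (u ++ e :: (m ++ f :: v)) = m.length + 1 := by
  have he := hnd.idxOf_append_cons
  have hassoc : u ++ e :: (m ++ f :: v) = (u ++ e :: m) ++ f :: v := by simp
  rw [hassoc] at hnd he ⊢
  have hf := hnd.idxOf_append_cons
  simp only [List.length_append, List.length_cons] at hf
  unfold gap12 Nat.dist
  rcases hef with ⟨rfl, rfl⟩ | ⟨rfl, rfl⟩ <;> omega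

theorem exists_eq_append_cons_append_cons {p : List ℕ} (h1 : 1 ∈ p) (h2 : 2 ∈ p) :
    ∃ e f u m v, (e = 1 ∧ f = 2 ∨ e = 2 ∧ f = 1) ∧ p = u ++ e :: (m ++ f :: v) := by
  obtain ⟨s, t, rfl⟩ := List.append_of_mem h1
  rcases List.mem_append.1 h2 with hs | ht
  · obtain ⟨u, m, rfl⟩ := List.append_of_mem hs
    exact ⟨2, 1, u, m, t, Or.inr ⟨rfl, rfl⟩, by simp⟩
  · obtain ⟨m, v, rfl⟩ := List.append_of_mem (List.mem_of_ne_of_mem (by decide) ht)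
    exact ⟨1, 2, s, m, v, Or.inl ⟨rfl, rfl⟩, rfl⟩

theorem exists_SC231_eq_append_cons {p u m v : List ℕ} {e f : ℕ}
    (hef : e = 1 ∧ f = 2 ∨ e = 2 ∧ f = 1)
    (hp : p = u ++ e :: (m ++ f :: v)) (hnd : p.Nodup) (hpos : ∀ x ∈ p, 0 < x) :
    ∃ A W B, SC231 p = A ++ f :: (W ++ e :: B) ∧ W.length ≤ m.length ∧
      (AvoidsConsec231 (e :: (m ++ f :: v)) → m ≠ [] → W.length < m.length) := by
  have hperm : p.Perm (e :: f :: (u ++ m ++ v)) := by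
    rw [hp]
    exact List.perm_middle.trans (.cons e (by rw [← List.append_assoc]; exact List.perm_middle))
  obtain ⟨he, hf, hrest⟩ := List.nodup_cons.1 (hperm.nodup_iff.1 hnd) |>.imp_right List.nodup_cons.1
  have hbig : ∀ x ∈ u ++ m ++ v, 2 < x := by
    intro x hx
    have := hpos x (hperm.mem_iff.2 (List.mem_cons_of_mem e (List.mem_cons_of_mem f hx)))
    have : x ≠ e := fun h => he (h ▸ List.mem_cons_of_mem f hx)
    have : x ≠ f := fun h => hf (h ▸ hx)
    omega
  obtain ⟨V, W, hV, hle, hlt⟩ :=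
    exists_finalStack_cons_append_cons (v := v) (S := finalStack u []) hef
    (fun x hx => hbig x (by simp [hx])) (hrest.sublist (List.infix_append u m v).sublist)
    (fun x hx => hbig x (List.mem_append_left _ (List.mem_append_left _
      (by simpa using mem_of_mem_finalStack hx))))
  refine ⟨prePops p ++ V, W, finalStack u [], ?_, hle, hlt⟩
  have hfinal : finalStack p [] = V ++ f :: (W ++ e :: finalStack u []) := by
    rw [hp, finalStack_append, hV]
  rw [SC231_eq, hfinal, List.append_assoc]

theorem gap12_SC231_of_eq {p u m v : List ℕ} {e f : ℕ} (hef : e = 1 ∧ f = 2 ∨ e = 2 ∧ f = 1)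
    (hp : p = u ++ e :: (m ++ f :: v)) (hnd : p.Nodup) (hpos : ∀ x ∈ p, 0 < x) :
    gap12 (SC231 p) ≤ gap12 p ∧
      (AvoidsConsec231 (e :: (m ++ f :: v)) → 2 ≤ gap12 p → gap12 (SC231 p) < gap12 p) := by
  obtain ⟨A, W, B, hSC, hle, hlt⟩ := exists_SC231_eq_append_cons hef hp hnd hpos
  have hnd' : (SC231 p).Nodup := (SC231_perm p).nodup_iff.2 hnd
  rw [hSC] at hnd' ⊢
  rw [gap12_eq (by tauto) hnd']
  subst hp
  rw [gap12_eq hef hnd]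
  refine ⟨by omega, fun h231 hgap => ?_⟩
  have := hlt h231 (by rintro rfl; simp at hgap)
  omega

theorem gap12_SC231_le {p : List ℕ} (hnd : p.Nodup) (hpos : ∀ x ∈ p, 0 < x) (h1 : 1 ∈ p)
    (h2 : 2 ∈ p) : gap12 (SC231 p) ≤ gap12 p := by
  obtain ⟨e, f, u, m, v, hef, hp⟩ := exists_eq_append_cons_append_cons h1 h2
  exact (gap12_SC231_of_eq hef hp hnd hpos).1

theorem gap12_SC231_SC231_lt {p : List ℕ} (hnd : p.Nodup) (hpos : ∀ x ∈ p, 0 < x)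
    (h1 : 1 ∈ p) (h2 : 2 ∈ p) (hgap : 2 ≤ gap12 (SC231 p)) :
    gap12 (SC231 (SC231 p)) < gap12 (SC231 p) := by
  have hperm := SC231_perm p
  obtain ⟨e, f, u, m, v, hef, hp⟩ :=
    exists_eq_append_cons_append_cons (hperm.mem_iff.2 h1) (hperm.mem_iff.2 h2)
  exact (gap12_SC231_of_eq hef hp (hperm.nodup_iff.2 hnd) (fun x hx => hpos x (hperm.subset hx))).2
    (avoidsConsec231_of_SC231_eq hpos (by omega) hp) hgap

theorem gap12_iterate_SC231 {p : List ℕ} (hnd : p.Nodup) (hpos : ∀ x ∈ p, 0 < x) (h1 : 1 ∈ p)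
    (h2 : 2 ∈ p) (j : ℕ) (hj : gap12 (SC231 p) ≤ j + 1) :
    gap12 (SC231^[j] (SC231 p)) = 1 := by
  induction j generalizing p with
  | zero =>
    have := one_le_gap12 ((SC231_perm p).mem_iff.2 h1)
    rw [Function.iterate_zero_apply]
    omega
  | succ j ih =>
    have hperm := SC231_perm p
    have hnd' := hperm.nodup_iff.2 hnd
    have hpos' : ∀ x ∈ SC231 p, 0 < x := fun x hx => hpos x (hperm.subset hx)
    have h1' := hperm.mem_iff.2 h1
    have h2' := hperm.mem_iff.2 h2
    rw [Function.iterate_succ_apply]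
    refine ih hnd' hpos' h1' h2' ?_
    by_cases hgap : 2 ≤ gap12 (SC231 p)
    · have := gap12_SC231_SC231_lt hnd hpos h1 h2 hgap
      omega
    · have := gap12_SC231_le hnd' hpos' h1' h2'
      omega

theorem adj12_after_iterates_general (n : ℕ) (hn : 1 ≤ n) (p : List ℕ) (hp : IsPermOf n p) :
    Adj12 (SC231^[n - 1] p) := by
  obtain rfl | ⟨k, rfl⟩ : n = 1 ∨ ∃ k, n = k + 2 := by
    rcases n with _ | _ | k
    exacts [absurd hn (by decide), .inl rfl, .inr ⟨k, rfl⟩]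
  · rw [IsPermOf, List.range'_one, List.perm_singleton] at hp
    subst hp
    simp [Adj12]
  have hnd : p.Nodup := hp.nodup_iff.2 List.nodup_range'
  have hpos : ∀ x ∈ p, 0 < x := fun x hx => by
    have := List.mem_range'_1.1 (hp.subset hx)
    omega
  have h1 : 1 ∈ p := hp.mem_iff.2 (List.mem_range'_1.2 ⟨le_rfl, by omega⟩)
  have h2 : 2 ∈ p := hp.mem_iff.2 (List.mem_range'_1.2 ⟨by omega, by omega⟩)
  rw [adj12_iff_gap12_eq_one, show k + 2 - 1 = k + 1 from rfl, Function.iterate_succ_apply]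
  refine gap12_iterate_SC231 hnd hpos h1 h2 k ?_
  calc gap12 (SC231 p) ≤ gap12 p := gap12_SC231_le hnd hpos h1 h2
    _ ≤ p.length - 1 := gap12_le_length_sub_one h1 h2
    _ = k + 1 := by rw [hp.length_eq, List.length_range']; rfl

/-- If `1` and `2` are not adjacent in a permutation `p` of `{1,…,n}`, then after at most
`n - 1` applications of `SC_231` they become adjacent. -/
theorem adj12_after_iterates (n : ℕ) (hn : 1 ≤ n) (p : List ℕ) (hp : IsPermOf n p)
    (h : ¬ Adj12 p) : Adj12 (SC231^[n - 1] p) :=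
  adj12_after_iterates_general n hn p hp
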